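/- arXiv:2605.00673 — 3 statements merged into one kernel-verified Lean document; each statement's English description precedes it below -/
import Mathlib

section
/- Let n ≥ 2 and N ≥ 2 be an integer. If P(x) = Σ_{r=1}^n u_r p_r(x) with p_r(x) = x^r − N^{r−n} x^{2n−r} (1 ≤ r ≤ n−1), p_n(x) = x^{2n} − N^n, and rational u_r, is a nonzero polynomial, then P cannot equal a nonzero scalar multiple of Π_{d | N} (x − d) when N is square-free with exactly 2n divisors. Consequently if P vanishes at all 2n divisors of N, then all u_r = 0. -/
open Polynomial

/-- a nonzero combination `P = Σ u_r p_r` is never a nonzero scalar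
multiple of `Π_{d|N} (X - d)`; consequently if `P` vanishes at all `2n` divisors
of `N`, all `u_r` vanish. -/
theorem stmt2 (n N : ℕ) (hn : 2 ≤ n) (hN2 : 2 ≤ N) (hsf : Squarefree N)
    (hdiv : N.divisors.card = 2 * n)
    (p : ℕ → Polynomial ℚ)
    (hp : ∀ r, 1 ≤ r → r ≤ n - 1 →
      p r = X ^ r - C ((N : ℚ) ^ ((r : ℤ) - (n : ℤ))) * X ^ (2 * n - r))
    (hpn : p n = X ^ (2 * n) - C ((N : ℚ) ^ n))
    (u : ℕ → ℚ) (P : Polynomial ℚ)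
    (hP : P = ∑ r ∈ Finset.Icc 1 n, C (u r) * p r) :
    (P ≠ 0 → ∀ c : ℚ, c ≠ 0 → P ≠ C c * ∏ d ∈ N.divisors, (X - C (d : ℚ))) ∧
    ((∀ d ∈ N.divisors, P.eval (d : ℚ) = 0) → ∀ r ∈ Finset.Icc 1 n, u r = 0) := by
  have hN0 : N ≠ 0 := by omega
  have hNQ : ((N : ℚ) ^ n) ≠ 0 := by positivity
  have hcoeff : ∀ k, P.coeff k = ∑ r ∈ Finset.Icc 1 n, u r * (p r).coeff k := by
    intro k
    rw [hP, Polynomial.finset_sum_coeff]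
    exact Finset.sum_congr rfl fun r _ => by rw [coeff_C_mul]
  have hmemn : n ∈ Finset.Icc 1 n := Finset.mem_Icc.mpr ⟨by omega, le_refl n⟩
  -- coefficient at 0
  have h0 : P.coeff 0 = -((N:ℚ)^n) * u n := by
    rw [hcoeff, Finset.sum_eq_single n]
    · rw [hpn, coeff_sub, coeff_X_pow, coeff_C, if_neg (by omega), if_pos rfl]
      ring
    · intro r hr hrn
      simp only [Finset.mem_Icc] at hr
      rw [hp r hr.1 (by omega), coeff_sub, coeff_C_mul, coeff_X_pow, coeff_X_pow,
        if_neg (by omega), if_neg (by omega)]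
      ring
    · exact fun h => absurd hmemn h
  -- coefficient at 2n
  have h2n : P.coeff (2 * n) = u n := by
    rw [hcoeff, Finset.sum_eq_single n]
    · rw [hpn, coeff_sub, coeff_X_pow, coeff_C, if_pos rfl, if_neg (by omega)]
      ring
    · intro r hr hrn
      simp only [Finset.mem_Icc] at hr
      rw [hp r hr.1 (by omega), coeff_sub, coeff_C_mul, coeff_X_pow, coeff_X_pow,
        if_neg (by omega), if_neg (by omega)]
      ring
    · exact fun h => absurd hmemn h
  -- coefficient at k for 1 ≤ k ≤ n-1
  have hk : ∀ k, 1 ≤ k → k ≤ n - 1 → P.coeff k = u k := by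
    intro k hk1 hk2
    rw [hcoeff, Finset.sum_eq_single k]
    · rw [hp k hk1 hk2, coeff_sub, coeff_C_mul, coeff_X_pow, coeff_X_pow,
        if_pos rfl, if_neg (by omega)]
      ring
    · intro r hr hrk
      simp only [Finset.mem_Icc] at hr
      rcases eq_or_ne r n with heq | hrn
      · rw [heq, hpn, coeff_sub, coeff_X_pow, coeff_C,
          if_neg (by omega), if_neg (by omega)]
        ring
      · rw [hp r hr.1 (by omega), coeff_sub, coeff_C_mul, coeff_X_pow, coeff_X_pow,
          if_neg (by omega), if_neg (by omega)]
        ring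
    · exact fun h => absurd (Finset.mem_Icc.mpr ⟨hk1, by omega⟩) h
  -- degree bound
  have hdeg : P.natDegree ≤ 2 * n := by
    rw [hP]
    refine Polynomial.natDegree_sum_le_of_forall_le _ _ fun r hr => ?_
    refine (natDegree_C_mul_le _ _).trans ?_
    simp only [Finset.mem_Icc] at hr
    rcases eq_or_ne r n with heq | hrn
    · rw [heq, hpn]
      refine (natDegree_sub_le _ _).trans ?_
      simp
    · rw [hp r hr.1 (by omega)]
      refine (natDegree_sub_le _ _).trans ?_
      rw [max_le_iff]
      refine ⟨by rw [natDegree_X_pow]; omega, ?_⟩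
      refine (natDegree_C_mul_le _ _).trans ?_
      rw [natDegree_X_pow]; omega
  -- the product
  set Q : Polynomial ℚ := ∏ d ∈ N.divisors, (X - C (d : ℚ)) with hQ
  have hQmonic : Q.Monic := monic_prod_of_monic _ _ fun d _ => monic_X_sub_C _
  have hQdeg : Q.natDegree = 2 * n := by
    rw [hQ, natDegree_prod_of_monic _ _ fun d _ => monic_X_sub_C _]
    simp only [natDegree_X_sub_C]
    rw [Finset.sum_const, hdiv, smul_eq_mul, mul_one]
  have hprodd : (∏ d ∈ N.divisors, d) = N ^ n := by
    have hsq : (∏ d ∈ N.divisors, d) ^ 2 = N ^ (2 * n) := by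
      rw [sq]
      nth_rewrite 2 [← Nat.prod_div_divisors N (fun d => d)]
      rw [← Finset.prod_mul_distrib]
      have : ∀ d ∈ N.divisors, d * (N / d) = N := fun d hd =>
        Nat.mul_div_cancel' (Nat.mem_divisors.mp hd).1
      rw [Finset.prod_congr rfl this, Finset.prod_const, hdiv]
    exact Nat.pow_left_injective (by norm_num : 2 ≠ 0)
      (show _ ^ 2 = _ ^ 2 by rw [hsq]; ring)
  have hQ0 : Q.coeff 0 = (N:ℚ)^n := by
    rw [Polynomial.coeff_zero_eq_eval_zero, hQ, Polynomial.eval_prod]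
    simp only [eval_sub, eval_X, eval_C, zero_sub]
    have : ∏ x ∈ N.divisors, (-(x:ℚ)) =
        (-1)^(N.divisors.card) * ∏ x ∈ N.divisors, (x:ℚ) := by
      rw [← Finset.prod_const, ← Finset.prod_mul_distrib]
      exact Finset.prod_congr rfl fun x _ => by ring
    rw [this, hdiv, pow_mul]
    norm_num
    rw [← Nat.cast_prod, hprodd]
    push_cast
    ring
  -- Part 1
  have part1 : P ≠ 0 → ∀ c : ℚ, c ≠ 0 → P ≠ C c * Q := by
    intro _ c hc heq
    have e2n : u n = c := by
      have h := congrArg (fun q => Polynomial.coeff q (2 * n)) heq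
      simp only [coeff_C_mul] at h
      rw [h2n] at h
      rw [h, ← hQdeg, hQmonic.coeff_natDegree, mul_one]
    have e0 : -((N:ℚ)^n) * u n = c * (N:ℚ)^n := by
      have h := congrArg (fun q => Polynomial.coeff q 0) heq
      simp only [coeff_C_mul] at h
      rw [h0, hQ0] at h
      exact h
    rw [e2n] at e0
    apply hc
    have h2 : c * (2 * (N:ℚ)^n) = 0 := by linarith [e0]
    rcases mul_eq_zero.mp h2 with h | h
    · exact h
    · exact absurd h (by positivity)
  refine ⟨part1, ?_⟩
  -- Part 2
  intro hev
  have hP0 : P = 0 := by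
    by_contra hP0
    have hle : (N.divisors.val.map (Nat.cast : ℕ → ℚ)) ≤ P.roots := by
      rw [Multiset.le_iff_subset (N.divisors.nodup.map Nat.cast_injective)]
      intro x hx
      simp only [Multiset.mem_map] at hx
      obtain ⟨d, hd, rfl⟩ := hx
      rw [Polynomial.mem_roots hP0]
      exact hev d hd
    have hdvd : Q ∣ P := by
      have h2 := (Multiset.prod_X_sub_C_dvd_iff_le_roots hP0 _).mpr hle
      rw [Multiset.map_map] at h2
      exact h2
    have hdeg' : Q.natDegree ≤ P.natDegree := Polynomial.natDegree_le_of_dvd hdvd hP0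
    obtain ⟨t, ht⟩ := hdvd
    have ht0 : t ≠ 0 := fun h => hP0 (by rw [ht, h, mul_zero])
    have htdeg : t.natDegree = 0 := by
      have h3 := Polynomial.natDegree_mul (hQmonic.ne_zero) ht0
      rw [← ht] at h3
      omega
    obtain ⟨c, rfl⟩ : ∃ c, t = C c := ⟨t.coeff 0, Polynomial.eq_C_of_natDegree_eq_zero htdeg⟩
    have hc0 : c ≠ 0 := fun h => ht0 (by rw [h, map_zero])
    exact part1 hP0 c hc0 (by rw [ht, mul_comm])
  intro r hr
  simp only [Finset.mem_Icc] at hr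
  rcases eq_or_ne r n with heq | hrn
  · rw [heq, ← h2n, hP0, coeff_zero]
  · rw [← hk r hr.1 (by omega), hP0, coeff_zero]
end

section
/- Let (b_n) be a sequence of real numbers satisfying the Apéry recurrence (n+1)³ b_{n+1} − (34n³ + 51n² + 27n + 5) b_n + n³ b_{n−1} = 0 for n ≥ 1. Fix α ≠ 0 and set c_n = b_n + α b_{n−1} for n ≥ 1 and U_n = α²(n+1)³ + α(34n³ + 51n² + 27n + 5) + n³. Assume U_n ≠ 0 and U_{n+1} ≠ 0. Then P_n c_{n+2} + Q_n c_{n+1} + R_n c_n = 0, where P_n = α(n+2)³ U_n, Q_n = (n+1)³(U_n + α² U_{n+1}) − U_n U_{n+1}, and R_n = α n³ U_{n+1}. -/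
/-- the shifted sequence `c_n = b_n + α b_{n-1}` of an Apéry
sequence satisfies the stated second-order recurrence. -/
theorem stmt7 (b : ℕ → ℝ) (α : ℝ) (hα : α ≠ 0)
    (hrec : ∀ n : ℕ, 1 ≤ n →
      ((n : ℝ) + 1) ^ 3 * b (n + 1)
        - (34 * (n : ℝ) ^ 3 + 51 * (n : ℝ) ^ 2 + 27 * (n : ℝ) + 5) * b n
        + (n : ℝ) ^ 3 * b (n - 1) = 0)
    (c U : ℕ → ℝ)
    (hc : ∀ n : ℕ, 1 ≤ n → c n = b n + α * b (n - 1))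
    (hU : ∀ n : ℕ, U n = α ^ 2 * ((n : ℝ) + 1) ^ 3
        + α * (34 * (n : ℝ) ^ 3 + 51 * (n : ℝ) ^ 2 + 27 * (n : ℝ) + 5)
        + (n : ℝ) ^ 3)
    (n : ℕ) (hn : 1 ≤ n) (h1 : U n ≠ 0) (h2 : U (n + 1) ≠ 0) :
    (α * ((n : ℝ) + 2) ^ 3 * U n) * c (n + 2)
      + ((((n : ℝ) + 1) ^ 3 * (U n + α ^ 2 * U (n + 1))) - U n * U (n + 1)) * c (n + 1)
      + (α * (n : ℝ) ^ 3 * U (n + 1)) * c n = 0 := by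
  have e1 := hrec n hn
  have e2 := hrec (n + 1) (by omega)
  have hcn := hc n hn
  have hcn1 := hc (n + 1) (by omega)
  have hcn2 := hc (n + 2) (by omega)
  simp only [Nat.add_sub_cancel, show n + 2 - 1 = n + 1 from rfl] at hcn1 hcn2 e2
  rw [hcn, hcn1, hcn2, hU n, hU (n + 1)]
  push_cast at e1 e2 ⊢
  ring_nf
  ring_nf at e1 e2
  linear_combination (α ^ 2 * (α ^ 2 * ((n : ℝ) + 2) ^ 3
      + α * (34 * ((n : ℝ) + 1) ^ 3 + 51 * ((n : ℝ) + 1) ^ 2 + 27 * ((n : ℝ) + 1) + 5)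
      + ((n : ℝ) + 1) ^ 3)) * e1
    + (α * (α ^ 2 * ((n : ℝ) + 1) ^ 3
      + α * (34 * (n : ℝ) ^ 3 + 51 * (n : ℝ) ^ 2 + 27 * (n : ℝ) + 5)
      + (n : ℝ) ^ 3)) * e2
end

section
/- Let B₃, B₂, B₁, B₀ be polynomials, D = t·d/dt, and suppose B(t) satisfies Σᵢ Bᵢ(t) Dⁱ B = 0 on a domain where w = 1 + αt ≠ 0. Set C(t) = w·B(t). Then Σᵢ Aᵢ(t) Dⁱ C = 0, where A₃ = w³B₃, A₂ = w²(−3αt B₃ + w B₂), A₁ = w(−3αt(1−αt)B₃ − 2αt w B₂ + w² B₁), and A₀ = −αt(1 − 4αt + α²t²)B₃ − αt w(1−αt)B₂ − αt w² B₁ + w³ B₀. -/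
/-!
Write `w = 1 + u` with `u = αt`. Since `D u = u`, the Leibniz rule gives `D (u f) = u (f + D f)`,
hence `Dᵏ C = w Dᵏ B + u ((1 + D)ᵏ - Dᵏ) B`. Substituting this for `k ≤ 3`, the operator with
coefficients `Aᵢ` applied to `C` becomes exactly `w⁴ Σ Bᵢ Dⁱ B`, which vanishes.
-/

noncomputable def eulerOp (f : ℝ → ℝ) : ℝ → ℝ := fun t => t * deriv f t

section

variable {f g : ℝ → ℝ}

theorem contDiff_eulerOp {n : ℕ} (hf : ContDiff ℝ (n + 1) f) : ContDiff ℝ n (eulerOp f) :=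
  contDiff_id.mul (contDiff_succ_iff_deriv.mp hf).2.2

theorem eulerOp_fun_add (hf : Differentiable ℝ f) (hg : Differentiable ℝ g) :
    eulerOp (fun s => f s + g s) = fun s => eulerOp f s + eulerOp g s := by
  ext t
  simp only [eulerOp, deriv_fun_add (hf t) (hg t)]
  ring

theorem eulerOp_fun_mul (hf : Differentiable ℝ f) (hg : Differentiable ℝ g) :
    eulerOp (fun s => f s * g s) = fun s => eulerOp f s * g s + f s * eulerOp g s := by
  ext t
  simp only [eulerOp, deriv_fun_mul (hf t) (hg t)]
  ring

theorem eulerOp_const (c : ℝ) : eulerOp (fun _ => c) = 0 := by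
  ext t
  simp [eulerOp]

theorem eulerOp_const_mul_id (α : ℝ) : eulerOp (fun s => α * s) = fun s => α * s := by
  ext t
  simp [eulerOp, mul_comm]

section AffineMul

variable (α : ℝ)

theorem eulerOp_affine_mul (hf : Differentiable ℝ f) :
    eulerOp (fun s => (1 + α * s) * f s) = fun s => (1 + α * s) * eulerOp f s + α * s * f s := by
  simp (disch := fun_prop) only [eulerOp_fun_mul, eulerOp_fun_add, eulerOp_const,
    eulerOp_const_mul_id, Pi.zero_apply, zero_add]
  ext s
  ring

theorem eulerOp_eulerOp_affine_mul (hf : ContDiff ℝ 2 f) :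
    eulerOp (eulerOp (fun s => (1 + α * s) * f s)) =
      fun s => (1 + α * s) * eulerOp (eulerOp f) s + α * s * (2 * eulerOp f s + f s) := by
  have h₀ : Differentiable ℝ f := hf.differentiable (by norm_num)
  have h₁ : Differentiable ℝ (eulerOp f) := (contDiff_eulerOp hf).differentiable (by norm_num)
  rw [eulerOp_affine_mul α h₀]
  simp (disch := fun_prop) only [eulerOp_fun_add, eulerOp_fun_mul, eulerOp_affine_mul α h₁,
    eulerOp_const_mul_id]
  ext s
  ring

theorem eulerOp_eulerOp_eulerOp_affine_mul (hf : ContDiff ℝ 3 f) :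
    eulerOp (eulerOp (eulerOp (fun s => (1 + α * s) * f s))) =
      fun s => (1 + α * s) * eulerOp (eulerOp (eulerOp f)) s
        + α * s * (3 * eulerOp (eulerOp f) s + 3 * eulerOp f s + f s) := by
  have h₀ : Differentiable ℝ f := hf.differentiable (by norm_num)
  have h₁ : Differentiable ℝ (eulerOp f) := (contDiff_eulerOp hf).differentiable (by norm_num)
  have h₂ : Differentiable ℝ (eulerOp (eulerOp f)) :=
    (contDiff_eulerOp (contDiff_eulerOp hf)).differentiable (by norm_num)
  rw [eulerOp_eulerOp_affine_mul α (hf.of_le (by norm_num))]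
  simp (disch := fun_prop) only [eulerOp_fun_add, eulerOp_fun_mul, eulerOp_affine_mul α h₂,
    eulerOp_const_mul_id, eulerOp_const, Pi.zero_apply]
  ext s
  ring

end AffineMul

end

theorem stmt15_general (α : ℝ) (B₃ B₂ B₁ B₀ : Polynomial ℝ)
    (D : (ℝ → ℝ) → (ℝ → ℝ)) (hD : ∀ f t, D f t = t * deriv f t)
    (B : ℝ → ℝ) (hB : ContDiff ℝ 3 B)
    (S : Set ℝ)
    (hsol : ∀ t ∈ S,
      B₃.eval t * D (D (D B)) t + B₂.eval t * D (D B) t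
        + B₁.eval t * D B t + B₀.eval t * B t = 0)
    (Cf : ℝ → ℝ) (hCf : ∀ t, Cf t = (1 + α * t) * B t) :
    ∀ t ∈ S,
      let w : ℝ := 1 + α * t
      (w ^ 3 * B₃.eval t) * D (D (D Cf)) t
        + (w ^ 2 * (-(3 * α * t) * B₃.eval t + w * B₂.eval t)) * D (D Cf) t
        + (w * (-(3 * α * t) * (1 - α * t) * B₃.eval t - 2 * α * t * w * B₂.eval t
            + w ^ 2 * B₁.eval t)) * D Cf t
        + (-(α * t) * (1 - 4 * α * t + α ^ 2 * t ^ 2) * B₃.eval t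
            - α * t * w * (1 - α * t) * B₂.eval t
            - α * t * w ^ 2 * B₁.eval t + w ^ 3 * B₀.eval t) * Cf t = 0 := by
  have hD : D = eulerOp := funext fun f => funext (hD f)
  have hC : Cf = fun s => (1 + α * s) * B s := funext hCf
  intro t ht w
  have hBt := hsol t ht
  rw [hD] at hBt ⊢
  rw [hC, eulerOp_eulerOp_eulerOp_affine_mul α hB,
    eulerOp_eulerOp_affine_mul α (hB.of_le (by norm_num)),
    eulerOp_affine_mul α (hB.differentiable (by norm_num))]
  linear_combination w ^ 4 * hBt

/-- multiplication by `w = 1 + αt` transforms the third-order Euler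
operator `Σ Bᵢ Dⁱ` into the operator with coefficients `Aᵢ` annihilating `C = wB`. -/
theorem stmt15 (α : ℝ) (B₃ B₂ B₁ B₀ : Polynomial ℝ)
    (D : (ℝ → ℝ) → (ℝ → ℝ)) (hD : ∀ f t, D f t = t * deriv f t)
    (B : ℝ → ℝ) (hB : ContDiff ℝ 3 B)
    (S : Set ℝ) (hS : IsOpen S) (hSw : ∀ t ∈ S, 1 + α * t ≠ 0)
    (hsol : ∀ t ∈ S,
      B₃.eval t * D (D (D B)) t + B₂.eval t * D (D B) t
        + B₁.eval t * D B t + B₀.eval t * B t = 0)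
    (Cf : ℝ → ℝ) (hCf : ∀ t, Cf t = (1 + α * t) * B t) :
    ∀ t ∈ S,
      let w : ℝ := 1 + α * t
      (w ^ 3 * B₃.eval t) * D (D (D Cf)) t
        + (w ^ 2 * (-(3 * α * t) * B₃.eval t + w * B₂.eval t)) * D (D Cf) t
        + (w * (-(3 * α * t) * (1 - α * t) * B₃.eval t - 2 * α * t * w * B₂.eval t
            + w ^ 2 * B₁.eval t)) * D Cf t
        + (-(α * t) * (1 - 4 * α * t + α ^ 2 * t ^ 2) * B₃.eval t
            - α * t * w * (1 - α * t) * B₂.eval t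
            - α * t * w ^ 2 * B₁.eval t + w ^ 3 * B₀.eval t) * Cf t = 0 :=
  stmt15_general α B₃ B₂ B₁ B₀ D hD B hB S hsol Cf hCf
end
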